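/- Let G be a finite type and δ : G → G → ℝ be symmetric and nonpositive. Then f is submodular in the diminishing-returns sense: for all finite subsets A ⊆ B of G and every x ∈ G with x ∉ B, f(A ∪ {x}) − f(A) ≥ f(B ∪ {x}) − f(B). -/

import Mathlib

/-! Adding `x ∉ E` to `E` removes `x` from the complement, so the marginal gain of `x` is `-δ x x`
plus the sum of the nonnegative terms `-(δ x j + δ j x)` over the complement of `insert x E`.
Enlarging `E` shrinks that complement, hence the gain. -/

open Finset

/-- The removal-set objective:
`f E = ∑_{i ∈ G \ E} ∑_{j ∈ G \ E} δ i j − ∑_{i ∈ G} ∑_{j ∈ G} δ i j`. -/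
def removalObj {G : Type*} [Fintype G] [DecidableEq G] (δ : G → G → ℝ) (E : Finset G) : ℝ :=
  (∑ i ∈ Eᶜ, ∑ j ∈ Eᶜ, δ i j) - ∑ i : G, ∑ j : G, δ i j

theorem Finset.sum_sum_insert_insert {α β : Type*} [DecidableEq α] [AddCommMonoid β]
    (f : α → α → β) {s : Finset α} {x : α} (hx : x ∉ s) :
    ∑ i ∈ insert x s, ∑ j ∈ insert x s, f i j
      = f x x + ∑ j ∈ s, (f x j + f j x) + ∑ i ∈ s, ∑ j ∈ s, f i j := by
  simp only [sum_insert hx, sum_add_distrib]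
  abel

theorem removalObj_insert_sub {G : Type*} [Fintype G] [DecidableEq G] (δ : G → G → ℝ)
    {E : Finset G} {x : G} (hx : x ∉ E) :
    removalObj δ (insert x E) - removalObj δ E
      = ∑ j ∈ (insert x E)ᶜ, -(δ x j + δ j x) - δ x x := by
  have hx_compl : x ∉ (insert x E)ᶜ := by simp
  rw [removalObj, removalObj, ← insert_compl_insert hx, sum_sum_insert_insert δ hx_compl,
    sum_neg_distrib]
  ring

theorem removalObj_submodular_general
    {G : Type*} [Fintype G] [DecidableEq G] (δ : G → G → ℝ)
    (hnonpos : ∀ i j, δ i j ≤ 0)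
    (A B : Finset G) (hAB : A ⊆ B) (x : G) (hx : x ∉ B) :
    removalObj δ (insert x A) - removalObj δ A
      ≥ removalObj δ (insert x B) - removalObj δ B := by
  rw [removalObj_insert_sub δ (fun h => hx (hAB h)), removalObj_insert_sub δ hx]
  gcongr
  intro j _ _
  linarith [hnonpos x j, hnonpos j x]

theorem removalObj_submodular
    {G : Type*} [Fintype G] [DecidableEq G] (δ : G → G → ℝ)
    (hsymm : ∀ i j, δ i j = δ j i) (hnonpos : ∀ i j, δ i j ≤ 0)
    (A B : Finset G) (hAB : A ⊆ B) (x : G) (hx : x ∉ B) :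
    removalObj δ (insert x A) - removalObj δ A
      ≥ removalObj δ (insert x B) - removalObj δ B :=
  removalObj_submodular_general δ hnonpos A B hAB x hx
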